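/- arXiv:1807.02884 — 2 statements merged into one kernel-verified Lean document; each statement's English description precedes it below -/
import Mathlib

section
/- Let H be any k-uniform hypergraph on [n] with weight matrix W = W(H) and let σ ∈ {±1}^n be balanced. If Π L_Γ Π is positive semidefinite, then σσᵀ is an optimal solution of the SDP with input W. Moreover, if the third-smallest eigenvalue of Π L_Γ Π is strictly positive, then σσᵀ is the unique optimal solution. -/
open Finset Filter Matrix

open scoped Classical

/-- The `k`-element subsets of `[n]`, i.e. the potential hyperedges. -/
abbrev KSet (n k : ℕ) := {e : Finset (Fin n) // e.card = k}

/-- A `±1` label vector (encoded by `Bool`) is balanced if it has equally many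
`+1`'s (`true`) and `-1`'s (`false`). -/
abbrev balanced {n : ℕ} (σ : Fin n → Bool) : Prop :=
  2 * (Finset.univ.filter (fun i => σ i = true)).card = n

/-- `e` is in-cluster w.r.t. `σ`: `σ` is constant on `e`. -/
abbrev inCluster {n : ℕ} (σ : Fin n → Bool) (e : Finset (Fin n)) : Prop :=
  ∀ i ∈ e, ∀ j ∈ e, σ i = σ j

/-- Probability that `e` appears as an edge, given the labels `σ`. -/
noncomputable def edgeP {n : ℕ} (p q : ℝ) (σ : Fin n → Bool) (e : Finset (Fin n)) : ℝ :=
  if inCluster σ e then p else q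

/-- Probability of observing exactly the hypergraph with edge-indicator `E`, given labels `σ`
(edges appear independently). -/
noncomputable def hypProb {n k : ℕ} (p q : ℝ) (σ : Fin n → Bool) (E : KSet n k → Bool) : ℝ :=
  ∏ e : KSet n k, if E e then edgeP p q σ e.1 else 1 - edgeP p q σ e.1

/-- Uniform prior on balanced label vectors. -/
noncomputable def sigProb (n : ℕ) (σ : Fin n → Bool) : ℝ :=
  if balanced σ then 1 / ((Finset.univ.filter (fun τ : Fin n → Bool => balanced τ)).card : ℝ)
  else 0

/-- Probability of an event `P` under the joint law `HSBM(n,p,q;k)` of `(σ, ℋ)`. -/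
noncomputable def prEvent (n k : ℕ) (p q : ℝ)
    (P : (Fin n → Bool) → (KSet n k → Bool) → Prop) : ℝ :=
  ∑ σ : Fin n → Bool, ∑ E : KSet n k → Bool,
    sigProb n σ * hypProb p q σ E * (if P σ E then 1 else 0)

/-- Global sign flip. -/
def negB {n : ℕ} (σ : Fin n → Bool) : Fin n → Bool := fun i => !(σ i)

/-- The edge probability parameter `α · log n / C(n-1, k-1)`. -/
noncomputable def pParam (k : ℕ) (α : ℝ) (n : ℕ) : ℝ :=
  α * Real.log n / ((n - 1).choose (k - 1) : ℝ)

/-- The real `±1` vector associated to a Boolean label vector. -/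
def sgn {n : ℕ} (σ : Fin n → Bool) : Fin n → ℝ := fun i => if σ i then 1 else -1

/-- The rank-one matrix `σσᵀ`. -/
noncomputable def outer {n : ℕ} (σ : Fin n → Bool) : Matrix (Fin n) (Fin n) ℝ :=
  Matrix.of fun i j => sgn σ i * sgn σ j

/-- The weighted adjacency matrix `W(H)`: `W i j` is the number of hyperedges containing
both `i` and `j` (zero on the diagonal). -/
noncomputable def Wmat {n k : ℕ} (E : KSet n k → Bool) : Matrix (Fin n) (Fin n) ℝ :=
  Matrix.of fun i j => if i = j then 0 else
    ((Finset.univ.filter (fun e : KSet n k => E e = true ∧ i ∈ e.1 ∧ j ∈ e.1)).card : ℝ)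

/-- Feasibility for the SDP relaxation: `X ⪰ 0`, unit diagonal, `⟨X, 𝟙𝟙ᵀ⟩ = 0`. -/
def sdpFeasible {n : ℕ} (X : Matrix (Fin n) (Fin n) ℝ) : Prop :=
  X.PosSemidef ∧ (∀ i, X i i = 1) ∧ (∑ i, ∑ j, X i j) = 0

/-- The SDP objective `⟨W, X⟩`. -/
noncomputable def sdpObj {n : ℕ} (W X : Matrix (Fin n) (Fin n) ℝ) : ℝ :=
  ∑ i, ∑ j, W i j * X i j

/-- `Xs` is the unique optimal solution of the SDP with input `W`. -/
def sdpUniqueOpt {n : ℕ} (W Xs : Matrix (Fin n) (Fin n) ℝ) : Prop :=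
  sdpFeasible Xs ∧ ∀ X, sdpFeasible X → X ≠ Xs → sdpObj W X < sdpObj W Xs

/-- `Γ = diag(σ) W diag(σ)`. -/
noncomputable def GammaM {n : ℕ} (σ : Fin n → Bool) (W : Matrix (Fin n) (Fin n) ℝ) :
    Matrix (Fin n) (Fin n) ℝ :=
  Matrix.diagonal (sgn σ) * W * Matrix.diagonal (sgn σ)

/-- The Laplacian `L_Γ = diag(Γ𝟙) - Γ`. -/
noncomputable def LGamma {n : ℕ} (σ : Fin n → Bool) (W : Matrix (Fin n) (Fin n) ℝ) :
    Matrix (Fin n) (Fin n) ℝ :=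
  Matrix.diagonal (fun i => ∑ j, GammaM σ W i j) - GammaM σ W

/-- `Π = I - (1/n)𝟙𝟙ᵀ - (1/n)σσᵀ`, the projector onto `span{𝟙, σ}ᗮ`. -/
noncomputable def PiM {n : ℕ} (σ : Fin n → Bool) : Matrix (Fin n) (Fin n) ℝ :=
  1 - (n : ℝ)⁻¹ • Matrix.of (fun _ _ => (1 : ℝ)) - (n : ℝ)⁻¹ • outer σ

/-- The third-smallest eigenvalue of a symmetric matrix, via the Courant–Fischer
max–min characterization over subspaces of dimension `n - 2`. -/
noncomputable def lambda3 {n : ℕ} (M : Matrix (Fin n) (Fin n) ℝ) : ℝ :=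
  sSup {r : ℝ | ∃ V : Submodule ℝ (Fin n → ℝ), Module.finrank ℝ V = n - 2 ∧
    ∀ x ∈ V, r * (∑ i, x i ^ 2) ≤ x ⬝ᵥ M.mulVec x}

/-!
Conjugating a feasible `X` by `diag σ` gives a positive semidefinite `Y` with unit diagonal and
`Y σ = 0`. The objective gap `⟨W, σσᵀ⟩ - ⟨W, X⟩` equals `tr (L_Γ Y)`, and since `L_Γ 𝟙 = 0` and
`σσᵀ Y = 0` this is `tr (Π L_Γ Π Y)`, a trace of a product of two positive semidefinite matrices,
hence nonnegative. If `λ₃ (Π L_Γ Π) > 0`, then `Π L_Γ Π ⪰ 0` with kernel exactly `span {𝟙, σ}`.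
A zero gap forces `Y Π L_Γ Π = 0`, so every row of `Y` lies in `span {𝟙, σ}`; with `Y σ = 0` and
unit diagonal this leaves only `Y = 𝟙𝟙ᵀ`, i.e. `X = σσᵀ`.
-/

open scoped ComplexOrder MatrixOrder in
lemma Matrix.PosSemidef.trace_mul_nonneg {ι 𝕜 : Type*} [Fintype ι] [RCLike 𝕜]
    {A B : Matrix ι ι 𝕜} (hA : A.PosSemidef) (hB : B.PosSemidef) : 0 ≤ (A * B).trace := by
  obtain ⟨C, rfl⟩ := CStarAlgebra.nonneg_iff_eq_star_mul_self.mp hB.nonneg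
  rw [← Matrix.mul_assoc, Matrix.trace_mul_comm, ← Matrix.mul_assoc]
  exact (hA.mul_mul_conjTranspose_same C).trace_nonneg

open scoped ComplexOrder MatrixOrder in
lemma Matrix.PosSemidef.mul_eq_zero_of_trace_mul_eq_zero {ι 𝕜 : Type*} [Fintype ι] [RCLike 𝕜]
    {A B : Matrix ι ι 𝕜} (hA : A.PosSemidef) (hB : B.PosSemidef) (h : (A * B).trace = 0) :
    A * B = 0 := by
  obtain ⟨C, rfl⟩ := CStarAlgebra.nonneg_iff_eq_star_mul_self.mp hA.nonneg
  obtain ⟨D, rfl⟩ := CStarAlgebra.nonneg_iff_eq_star_mul_self.mp hB.nonneg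
  -- `tr (C⋆C D⋆D)` is the squared Frobenius norm of `C D⋆`.
  have hCD : C * star D = 0 := by
    rw [← Matrix.conjTranspose_mul_self_eq_zero,
      ← (posSemidef_conjTranspose_mul_self _).trace_eq_zero_iff, ← h]
    simp only [Matrix.conjTranspose_mul, Matrix.star_eq_conjTranspose,
      Matrix.conjTranspose_conjTranspose]
    rw [Matrix.mul_assoc, Matrix.trace_mul_comm]
    simp only [Matrix.mul_assoc]
  rw [Matrix.mul_assoc, ← Matrix.mul_assoc C, hCD, Matrix.zero_mul, Matrix.mul_zero]

section Labels

variable {n : ℕ} {σ : Fin n → Bool}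

lemma sgn_mul_self (σ : Fin n → Bool) (i : Fin n) : sgn σ i * sgn σ i = 1 := by
  unfold sgn; split <;> norm_num

lemma diagonal_sgn_mul_self (σ : Fin n → Bool) :
    diagonal (sgn σ) * diagonal (sgn σ) = 1 := by
  rw [diagonal_mul_diagonal, ← diagonal_one]
  exact congrArg diagonal (funext (sgn_mul_self σ))

lemma sgn_dotProduct_sgn (σ : Fin n → Bool) : sgn σ ⬝ᵥ sgn σ = n := by
  simp [dotProduct, sgn_mul_self]

lemma one_dotProduct_sgn (hσ : balanced σ) : 1 ⬝ᵥ sgn σ = 0 := by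
  have hcard := Finset.card_filter_add_card_filter_not (s := Finset.univ) (fun i => σ i = true)
  rw [Finset.card_univ, Fintype.card_fin] at hcard
  simp only [one_dotProduct, sgn, Finset.sum_ite, Finset.sum_const, nsmul_eq_mul, mul_one,
    mul_neg]
  rw [show #{i | ¬σ i = true} = #{i | σ i = true} by unfold balanced at hσ; omega]
  ring

lemma outer_eq_vecMulVec (σ : Fin n → Bool) : outer σ = vecMulVec (sgn σ) (sgn σ) := rfl

lemma sdpFeasible_outer (hσ : balanced σ) : sdpFeasible (outer σ) := by
  refine ⟨?_, sgn_mul_self σ, ?_⟩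
  · simpa [outer_eq_vecMulVec] using posSemidef_vecMulVec_self_star (sgn σ)
  · simp only [outer, of_apply, ← Finset.mul_sum, ← Finset.sum_mul]
    simp [← one_dotProduct, one_dotProduct_sgn hσ]

end Labels

noncomputable def signConj {n : ℕ} (σ : Fin n → Bool) (X : Matrix (Fin n) (Fin n) ℝ) :
    Matrix (Fin n) (Fin n) ℝ :=
  diagonal (sgn σ) * X * diagonal (sgn σ)

section SignConj

variable {n : ℕ} {σ : Fin n → Bool} {X : Matrix (Fin n) (Fin n) ℝ}

lemma signConj_signConj (σ : Fin n → Bool) (X : Matrix (Fin n) (Fin n) ℝ) :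
    signConj σ (signConj σ X) = X := by
  simp only [signConj, ← Matrix.mul_assoc, diagonal_sgn_mul_self, Matrix.one_mul]
  rw [Matrix.mul_assoc, diagonal_sgn_mul_self, Matrix.mul_one]

lemma signConj_ones (σ : Fin n → Bool) : signConj σ (of fun _ _ => 1) = outer σ := by
  ext i j
  simp [signConj, outer]

lemma signConj_apply_self (hX : ∀ i, X i i = 1) (i : Fin n) : signConj σ X i i = 1 := by
  simp [signConj, hX, sgn_mul_self]

lemma posSemidef_signConj (hX : X.PosSemidef) : (signConj σ X).PosSemidef := by
  simpa [signConj] using hX.mul_mul_conjTranspose_same (diagonal (sgn σ))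

lemma sdpFeasible.mulVec_one (hX : sdpFeasible X) : X *ᵥ 1 = 0 := by
  rw [← hX.1.dotProduct_mulVec_zero_iff]
  simpa [dotProduct, mulVec] using hX.2.2

lemma sdpFeasible.signConj_mulVec_sgn (hX : sdpFeasible X) : signConj σ X *ᵥ sgn σ = 0 := by
  have hsgn : diagonal (sgn σ) *ᵥ sgn σ = 1 := funext fun i => by
    simp [mulVec_diagonal, sgn_mul_self]
  rw [signConj, ← mulVec_mulVec, hsgn, ← mulVec_mulVec, hX.mulVec_one, mulVec_zero]

lemma sdpFeasible.outer_mul_signConj (hX : sdpFeasible X) : outer σ * signConj σ X = 0 := by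
  rw [outer_eq_vecMulVec, vecMulVec_mul, ← mulVec_transpose,
    (isHermitian_iff_isSymm.mp (posSemidef_signConj hX.1).1).eq, hX.signConj_mulVec_sgn,
    vecMulVec_zero]

lemma sdpFeasible.signConj_mul_outer (hX : sdpFeasible X) : signConj σ X * outer σ = 0 := by
  rw [outer_eq_vecMulVec, mul_vecMulVec, hX.signConj_mulVec_sgn, zero_vecMulVec]

end SignConj

noncomputable def labelSpan {n : ℕ} (σ : Fin n → Bool) : Submodule ℝ (Fin n → ℝ) :=
  Submodule.span ℝ {1, sgn σ}

section LabelSpan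

variable {n : ℕ} {σ : Fin n → Bool}

lemma exists_eq_of_balanced (hσ : balanced σ) (hn : 0 < n) (b : Bool) : ∃ i, σ i = b := by
  have hcard := Finset.card_filter_add_card_filter_not (s := Finset.univ) (fun i => σ i = true)
  rw [Finset.card_univ, Fintype.card_fin] at hcard
  have hpos : 0 < #{i | σ i = b} := by
    cases b <;> simp only [Bool.not_eq_true] at hcard <;> omega
  obtain ⟨i, hi⟩ := Finset.card_pos.mp hpos
  exact ⟨i, (Finset.mem_filter.mp hi).2⟩

lemma finrank_labelSpan (hσ : balanced σ) (hn : 0 < n) :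
    Module.finrank ℝ (labelSpan σ) = 2 := by
  obtain ⟨i, hi⟩ := exists_eq_of_balanced hσ hn true
  obtain ⟨j, hj⟩ := exists_eq_of_balanced hσ hn false
  have hindep : LinearIndependent ℝ ![1, sgn σ] := by
    refine LinearIndependent.pair_iff.mpr fun a b hab => ?_
    have hi' := congrFun hab i
    have hj' := congrFun hab j
    simp [sgn, hi, hj] at hi' hj'
    constructor <;> linarith
  rw [labelSpan, ← Matrix.range_cons_cons_empty _ _ ![], finrank_span_eq_card hindep,
    Fintype.card_fin]

lemma PiM_mulVec (σ : Fin n → Bool) (v : Fin n → ℝ) :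
    PiM σ *ᵥ v = v - (n : ℝ)⁻¹ • ((1 ⬝ᵥ v) • 1 + (sgn σ ⬝ᵥ v) • sgn σ) := by
  rw [PiM, sub_mulVec, sub_mulVec, smul_mulVec, smul_mulVec, one_mulVec]
  ext i
  simp only [outer, mulVec, dotProduct, of_apply, Pi.sub_apply, Pi.smul_apply, Pi.add_apply,
    Pi.one_apply, smul_eq_mul, mul_add, Finset.sum_mul, Finset.mul_sum, ← sub_sub]
  refine congrArg₂ _ (congrArg _ ?_) ?_ <;> exact Finset.sum_congr rfl fun j _ => by ring

lemma PiM_mulVec_of_mem_labelSpan (hσ : balanced σ) (hn : 0 < n) {x : Fin n → ℝ}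
    (hx : x ∈ labelSpan σ) : PiM σ *ᵥ x = 0 := by
  obtain ⟨a, b, rfl⟩ := Submodule.mem_span_pair.mp hx
  have h1 : (1 : Fin n → ℝ) ⬝ᵥ 1 = n := by simp [dotProduct]
  have hcancel (c : ℝ) : (n : ℝ)⁻¹ * (c * n) = c := by field_simp
  simp [PiM_mulVec, h1, one_dotProduct_sgn hσ, dotProduct_comm (sgn σ) 1, sgn_dotProduct_sgn,
    smul_smul, hcancel]

lemma eq_ones_of_rows_mem_labelSpan (hσ : balanced σ) (hn : 0 < n)
    {Y : Matrix (Fin n) (Fin n) ℝ} (hrow : ∀ i, Y i ∈ labelSpan σ) (hY : Y *ᵥ sgn σ = 0)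
    (hdiag : ∀ i, Y i i = 1) :
    Y = of fun _ _ => 1 := by
  ext i j
  obtain ⟨a, b, hab⟩ := Submodule.mem_span_pair.mp (hrow i)
  have hbn : b * n = 0 := by
    have := congrFun hY i
    rwa [mulVec, ← hab, add_dotProduct, smul_dotProduct, smul_dotProduct, one_dotProduct_sgn hσ,
      sgn_dotProduct_sgn, smul_zero, zero_add, smul_eq_mul] at this
  have hb : b = 0 := by simpa [hn.ne'] using hbn
  have hYi : Y i = a • 1 := by rw [← hab, hb, zero_smul, add_zero]
  have ha : a = 1 := by simpa [hYi] using hdiag i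
  simp [hYi, ha]

end LabelSpan

section Lambda3

variable {n : ℕ} {M : Matrix (Fin n) (Fin n) ℝ}

lemma exists_pos_of_lambda3_pos (h : 0 < lambda3 M) :
    ∃ r > 0, ∃ V : Submodule ℝ (Fin n → ℝ), Module.finrank ℝ V = n - 2 ∧
      ∀ x ∈ V, r * (∑ i, x i ^ 2) ≤ x ⬝ᵥ M *ᵥ x := by
  by_contra hcon
  exact h.not_ge (Real.sSup_nonpos fun r ⟨V, hV, hVr⟩ =>
    le_of_not_gt fun hr => hcon ⟨r, hr, V, hV, hVr⟩)

lemma dotProduct_mulVec_add_of_mulVec_eq_zero (hM : M.IsSymm) {v z : Fin n → ℝ}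
    (hz : M *ᵥ z = 0) : (v + z) ⬝ᵥ M *ᵥ (v + z) = v ⬝ᵥ M *ᵥ v := by
  have hzM : z ᵥ* M = 0 := by rw [← mulVec_transpose, hM.eq, hz]
  rw [mulVec_add, hz, add_zero, add_dotProduct, dotProduct_mulVec z, hzM, zero_dotProduct,
    add_zero]

lemma posSemidef_and_ker_le_of_lambda3_pos (hM : M.IsSymm) {K : Submodule ℝ (Fin n → ℝ)}
    (hK : 2 ≤ Module.finrank ℝ K) (hMK : ∀ z ∈ K, M *ᵥ z = 0) (h : 0 < lambda3 M) :
    M.PosSemidef ∧ ∀ x, M *ᵥ x = 0 → x ∈ K := by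
  obtain ⟨r, hr, V, hVdim, hV⟩ := exists_pos_of_lambda3_pos h
  have hV₀ : ∀ v ∈ V, v ⬝ᵥ M *ᵥ v ≤ 0 → v = 0 := fun v hv hq => by
    have hsum : ∑ i, v i ^ 2 ≤ 0 := nonpos_of_mul_nonpos_right ((hV v hv).trans hq) hr
    rw [← dotProduct_self_eq_zero]
    exact le_antisymm (by simpa [dotProduct, sq] using hsum)
      (Finset.sum_nonneg fun i _ => mul_self_nonneg _)
  have hVK : V ⊓ K = ⊥ := (Submodule.eq_bot_iff _).mpr fun x ⟨hxV, hxK⟩ =>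
    hV₀ x hxV (by rw [hMK x hxK, dotProduct_zero])
  have hVK' : V ⊔ K = ⊤ := by
    apply Submodule.eq_top_of_finrank_eq
    have hsum := Submodule.finrank_sup_add_finrank_inf_eq V K
    have hle := Submodule.finrank_le (V ⊔ K)
    rw [hVK, finrank_bot, hVdim] at hsum
    rw [Module.finrank_fin_fun] at hle ⊢
    omega
  have hdecomp : ∀ x, ∃ v ∈ V, ∃ z ∈ K, v + z = x := fun x =>
    Submodule.mem_sup.mp (hVK' ▸ Submodule.mem_top)
  refine ⟨PosSemidef.of_dotProduct_mulVec_nonneg (isHermitian_iff_isSymm.mpr hM) fun x => ?_,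
    fun x hx => ?_⟩
  · obtain ⟨v, hv, z, hz, rfl⟩ := hdecomp x
    rw [star_trivial, dotProduct_mulVec_add_of_mulVec_eq_zero hM (hMK z hz)]
    exact (mul_nonneg hr.le (Finset.sum_nonneg fun i _ => sq_nonneg _)).trans (hV v hv)
  · obtain ⟨v, hv, z, hz, rfl⟩ := hdecomp x
    have hMv : M *ᵥ v = 0 := by rwa [mulVec_add, hMK z hz, add_zero] at hx
    rw [hV₀ v hv (by rw [hMv, dotProduct_zero]), zero_add]
    exact hz

end Lambda3

section Projection

variable {n : ℕ} {σ : Fin n → Bool} {W Y : Matrix (Fin n) (Fin n) ℝ}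

lemma LGamma_mul_ones : LGamma σ W * of (fun _ _ => (1 : ℝ)) = 0 := by
  ext i j
  simp [LGamma, mul_apply, diagonal_apply]

lemma isSymm_GammaM (hW : W.IsSymm) : (GammaM σ W).IsSymm := by
  simp only [GammaM, IsSymm, transpose_mul, diagonal_transpose, hW.eq, Matrix.mul_assoc]

lemma isSymm_LGamma (hW : W.IsSymm) : (LGamma σ W).IsSymm :=
  (isSymm_diagonal _).sub (isSymm_GammaM hW)

lemma ones_mul_LGamma (hW : W.IsSymm) : of (fun _ _ => (1 : ℝ)) * LGamma σ W = 0 := by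
  have h := congrArg transpose (LGamma_mul_ones (σ := σ) (W := W))
  rwa [transpose_mul, (isSymm_LGamma hW).eq, transpose_zero] at h

-- `Π` differs from `1` by multiples of `𝟙𝟙ᵀ`, which `L_Γ` kills on both sides, and of `σσᵀ`,
-- which `Y` kills on both sides.
lemma trace_PiM_LGamma_PiM_mul (hW : W.IsSymm) (hY₁ : outer σ * Y = 0)
    (hY₂ : Y * outer σ = 0) :
    (PiM σ * LGamma σ W * PiM σ * Y).trace = (LGamma σ W * Y).trace := by
  have hPY : PiM σ * Y = Y - (n : ℝ)⁻¹ • (of (fun _ _ => 1) * Y) := by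
    simp only [PiM, Matrix.sub_mul, Matrix.one_mul, Matrix.smul_mul, hY₁, smul_zero, sub_zero]
  have hYP : Y * PiM σ = Y - (n : ℝ)⁻¹ • (Y * of (fun _ _ => 1)) := by
    simp only [PiM, Matrix.mul_sub, Matrix.mul_one, Matrix.mul_smul, hY₂, smul_zero, sub_zero]
  have hLY : LGamma σ W * (PiM σ * Y) = LGamma σ W * Y := by
    rw [hPY, Matrix.mul_sub, Matrix.mul_smul, ← Matrix.mul_assoc, LGamma_mul_ones,
      Matrix.zero_mul, smul_zero, sub_zero]
  calc (PiM σ * LGamma σ W * PiM σ * Y).trace = (LGamma σ W * (PiM σ * Y) * PiM σ).trace := by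
        rw [show PiM σ * LGamma σ W * PiM σ * Y = PiM σ * (LGamma σ W * (PiM σ * Y)) by
          simp only [Matrix.mul_assoc], trace_mul_comm]
    _ = (LGamma σ W * Y).trace := by
        rw [hLY, Matrix.mul_assoc, hYP, Matrix.mul_sub, Matrix.mul_smul, trace_sub, trace_smul,
          ← Matrix.mul_assoc, trace_mul_comm (LGamma σ W * Y), ← Matrix.mul_assoc,
          ones_mul_LGamma hW, Matrix.zero_mul, trace_zero, smul_zero, sub_zero]

lemma isSymm_PiM (σ : Fin n → Bool) : (PiM σ).IsSymm :=
  (isSymm_one.sub ((IsSymm.ext fun _ _ => rfl).smul _)).sub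
    ((IsSymm.ext fun _ _ => mul_comm _ _).smul _)

lemma isSymm_PiM_LGamma_PiM (hW : W.IsSymm) : (PiM σ * LGamma σ W * PiM σ).IsSymm := by
  simp only [IsSymm, transpose_mul, (isSymm_PiM σ).eq, (isSymm_LGamma hW).eq, Matrix.mul_assoc]

end Projection

lemma isSymm_Wmat {n k : ℕ} (E : KSet n k → Bool) : (Wmat E).IsSymm := by
  refine IsSymm.ext fun i j => ?_
  simp only [Wmat, of_apply, eq_comm (a := j), and_comm (a := j ∈ _)]

section Certificate

variable {n : ℕ} {σ : Fin n → Bool} {W X : Matrix (Fin n) (Fin n) ℝ}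

lemma sdpObj_eq_trace_mul (hX : X.IsSymm) : sdpObj W X = (W * X).trace := by
  simp only [sdpObj, trace, diag_apply, mul_apply]
  exact Finset.sum_congr rfl fun i _ => Finset.sum_congr rfl fun j _ => by rw [hX.apply j i]

lemma sdpObj_outer_sub_sdpObj (hX : X.IsSymm) (hdiag : ∀ i, X i i = 1) :
    sdpObj W (outer σ) - sdpObj W X = (LGamma σ W * signConj σ X).trace := by
  have hΓ : (GammaM σ W * signConj σ X).trace = (W * X).trace := by
    have : GammaM σ W * signConj σ X = diagonal (sgn σ) * (W * X) * diagonal (sgn σ) := by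
      simp only [GammaM, signConj, Matrix.mul_assoc]
      rw [← Matrix.mul_assoc (diagonal _) (diagonal _), diagonal_sgn_mul_self, Matrix.one_mul]
    rw [this, trace_mul_cycle, diagonal_sgn_mul_self, Matrix.one_mul]
  have hdiagΓ : (diagonal (fun i => ∑ j, GammaM σ W i j) * signConj σ X).trace =
      sdpObj W (outer σ) := by
    simp only [trace, diag_apply, diagonal_mul, signConj_apply_self hdiag, mul_one, GammaM,
      mul_diagonal, diagonal_mul, sdpObj, outer, of_apply]
    exact Finset.sum_congr rfl fun i _ => Finset.sum_congr rfl fun j _ => by ring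
  rw [LGamma, Matrix.sub_mul, trace_sub, hΓ, hdiagΓ, sdpObj_eq_trace_mul hX]

lemma sdpObj_outer_sub_sdpObj_eq_trace (hW : W.IsSymm) (hX : sdpFeasible X) :
    sdpObj W (outer σ) - sdpObj W X = (PiM σ * LGamma σ W * PiM σ * signConj σ X).trace := by
  rw [trace_PiM_LGamma_PiM_mul hW hX.outer_mul_signConj hX.signConj_mul_outer,
    sdpObj_outer_sub_sdpObj (isHermitian_iff_isSymm.mp hX.1.1) hX.2.1]

lemma sdpObj_le_sdpObj_outer (hW : W.IsSymm) (hM : (PiM σ * LGamma σ W * PiM σ).PosSemidef)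
    (hX : sdpFeasible X) : sdpObj W X ≤ sdpObj W (outer σ) := by
  have := hM.trace_mul_nonneg (posSemidef_signConj (σ := σ) hX.1)
  rw [← sdpObj_outer_sub_sdpObj_eq_trace hW hX] at this
  linarith

lemma eq_outer_of_sdpObj_eq (hσ : balanced σ) (hn : 0 < n) (hW : W.IsSymm)
    (hM : (PiM σ * LGamma σ W * PiM σ).PosSemidef)
    (hker : ∀ x, (PiM σ * LGamma σ W * PiM σ) *ᵥ x = 0 → x ∈ labelSpan σ)
    (hX : sdpFeasible X) (h : sdpObj W X = sdpObj W (outer σ)) : X = outer σ := by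
  have hY := posSemidef_signConj (σ := σ) hX.1
  have hYM : signConj σ X * (PiM σ * LGamma σ W * PiM σ) = 0 := by
    refine hY.mul_eq_zero_of_trace_mul_eq_zero hM ?_
    rw [trace_mul_comm, ← sdpObj_outer_sub_sdpObj_eq_trace hW hX, h, sub_self]
  have hrow (i : Fin n) : signConj σ X i ∈ labelSpan σ := by
    refine hker _ ?_
    rw [← vecMul_transpose, (isHermitian_iff_isSymm.mp hM.1).eq, ← mul_apply_eq_vecMul, hYM]
    rfl
  have hones := eq_ones_of_rows_mem_labelSpan hσ hn hrow hX.signConj_mulVec_sgn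
    (signConj_apply_self hX.2.1)
  rw [← signConj_signConj σ X, hones, signConj_ones]

end Certificate

theorem sdp_dual_certificate_general (n k : ℕ) (hn0 : 0 < n)
    (E : KSet n k → Bool) (σ : Fin n → Bool) (hσ : balanced σ) :
    ((PiM σ * LGamma σ (Wmat E) * PiM σ).PosSemidef →
      sdpFeasible (outer σ) ∧
        ∀ X : Matrix (Fin n) (Fin n) ℝ, sdpFeasible X →
          sdpObj (Wmat E) X ≤ sdpObj (Wmat E) (outer σ)) ∧
    (0 < lambda3 (PiM σ * LGamma σ (Wmat E) * PiM σ) →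
      sdpUniqueOpt (Wmat E) (outer σ)) := by
  have hW := isSymm_Wmat E
  refine ⟨fun hM => ⟨sdpFeasible_outer hσ, fun X hX => sdpObj_le_sdpObj_outer hW hM hX⟩,
    fun hpos => ?_⟩
  obtain ⟨hM, hker⟩ := posSemidef_and_ker_le_of_lambda3_pos (isSymm_PiM_LGamma_PiM hW)
    (finrank_labelSpan hσ hn0).ge
    (fun z hz => by rw [← mulVec_mulVec, PiM_mulVec_of_mem_labelSpan hσ hn0 hz, mulVec_zero]) hpos
  exact ⟨sdpFeasible_outer hσ, fun X hX hne => (sdpObj_le_sdpObj_outer hW hM hX).lt_of_ne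
    fun h => hne (eq_outer_of_sdpObj_eq hσ hn0 hW hM hker hX h)⟩

/-- If `Π L_Γ Π ⪰ 0` then `σσᵀ` is an optimal solution of the SDP with
input `W(H)`; if moreover `λ₃(Π L_Γ Π) > 0` then it is the unique optimal solution. -/
theorem sdp_dual_certificate (n k : ℕ) (hn : Even n) (hn0 : 0 < n) (hk : 2 ≤ k)
    (E : KSet n k → Bool) (σ : Fin n → Bool) (hσ : balanced σ) :
    ((PiM σ * LGamma σ (Wmat E) * PiM σ).PosSemidef →
      sdpFeasible (outer σ) ∧
        ∀ X : Matrix (Fin n) (Fin n) ℝ, sdpFeasible X →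
          sdpObj (Wmat E) X ≤ sdpObj (Wmat E) (outer σ)) ∧
    (0 < lambda3 (PiM σ * LGamma σ (Wmat E) * PiM σ) →
      sdpUniqueOpt (Wmat E) (outer σ)) :=
  sdp_dual_certificate_general n k hn0 E σ hσ
end

section
/- Let n be even, k ≥ 2 an integer, and let σ, x ∈ {±1}^n be balanced vectors with Hamming distance d = #{v : x_v ≠ σ_v} (necessarily even). Then the number of k-subsets e of [n] on which x is constant but σ is not constant equals 2( C(n/2, k) − C(d/2, k) − C((n−d)/2, k) ), and the same formula gives the number of k-subsets on which σ is constant but x is not. -/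
open Finset

open scoped Classical

/-!
For `k ≠ 0`, the `k`-sets on which a map `f` is constant are the `k`-subsets of its fibres, so
there are `∑_b C(#f⁻¹(b), k)` of them. A `k`-set on which `x` is constant but `σ` is not is one
on which `x` is constant minus one on which the pair `(x, σ)` is constant. For balanced `x, σ`
at distance `d`, the fibres of `x` have size `n/2` and those of `(x, σ)` have sizes
`(n-d)/2, d/2, d/2, (n-d)/2`, which gives `2 C(n/2, k) - 2 C(d/2, k) - 2 C((n-d)/2, k)`.
-/

section
variable {α β γ : Type*} [Fintype α]

theorem card_filter_eq_sum_card_fiber [Fintype β] [DecidableEq β] (g : α → β) (p : β → Prop) :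
    #{i | p (g i)} = ∑ b with p b, #{i | g i = b} := by
  rw [sum_card_fiberwise_eq_card_filter univ {b | p b} g]
  simp

theorem card_bool_pair_fibers (x σ : α → Bool) :
    #{i | x i = true} = #{i | x i = true ∧ σ i = true} + #{i | x i = true ∧ σ i = false} ∧
    #{i | σ i = true} = #{i | x i = true ∧ σ i = true} + #{i | x i = false ∧ σ i = true} ∧
    #{i | x i ≠ σ i} = #{i | x i = true ∧ σ i = false} + #{i | x i = false ∧ σ i = true} ∧
    Fintype.card α = #{i | x i = true ∧ σ i = true} + #{i | x i = true ∧ σ i = false} +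
      (#{i | x i = false ∧ σ i = true} + #{i | x i = false ∧ σ i = false}) := by
  have fiberwise (p : Bool × Bool → Prop) := card_filter_eq_sum_card_fiber (fun i => (x i, σ i)) p
  refine ⟨?_, ?_, ?_, ?_⟩
  · simpa [sum_filter, Fintype.sum_prod_type] using fiberwise (·.1 = true)
  · simpa [sum_filter, Fintype.sum_prod_type] using fiberwise (·.2 = true)
  · simpa [sum_filter, Fintype.sum_prod_type] using fiberwise (fun p => p.1 ≠ p.2)
  · simpa [sum_filter, Fintype.sum_prod_type] using fiberwise (fun _ => True)

variable [DecidableEq α]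

theorem card_finsets_const_eq_sum_choose [Fintype β] [DecidableEq β] {k : ℕ} (hk : k ≠ 0)
    (f : α → β) :
    #{e : Finset α | #e = k ∧ ∀ i ∈ e, ∀ j ∈ e, f i = f j} = ∑ b, (#{i | f i = b}).choose k := by
  have hunion : ({e : Finset α | #e = k ∧ ∀ i ∈ e, ∀ j ∈ e, f i = f j} : Finset _) =
      univ.biUnion fun b => powersetCard k {i | f i = b} := by
    ext e
    simp only [mem_filter, mem_univ, true_and, mem_biUnion, mem_powersetCard, subset_iff]
    constructor
    · rintro ⟨rfl, hconst⟩
      obtain ⟨i₀, hi₀⟩ := card_ne_zero.mp hk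
      exact ⟨f i₀, fun j hj => hconst j hj i₀ hi₀, rfl⟩
    · rintro ⟨b, hsub, rfl⟩
      exact ⟨rfl, fun i hi j hj => (hsub hi).trans (hsub hj).symm⟩
  rw [hunion, card_biUnion]
  · simp_rw [card_powersetCard]
  · intro b _ c _ hbc
    refine disjoint_left.2 fun e hb hc => ?_
    rw [mem_powersetCard] at hb hc
    obtain ⟨i₀, hi₀⟩ := card_ne_zero.mp (hb.2.trans_ne hk)
    exact hbc ((mem_filter.1 (hb.1 hi₀)).2.symm.trans (mem_filter.1 (hc.1 hi₀)).2)

theorem card_const_not_const_add_card_const_prod [DecidableEq β] [DecidableEq γ] (k : ℕ)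
    (f : α → β) (g : α → γ) :
    #{e : Finset α | #e = k ∧ (∀ i ∈ e, ∀ j ∈ e, f i = f j) ∧ ¬∀ i ∈ e, ∀ j ∈ e, g i = g j} +
      #{e : Finset α | #e = k ∧ ∀ i ∈ e, ∀ j ∈ e, (f i, g i) = (f j, g j)} =
      #{e : Finset α | #e = k ∧ ∀ i ∈ e, ∀ j ∈ e, f i = f j} := by
  conv_rhs => rw [← card_filter_add_card_filter_not (fun e : Finset α => ∀ i ∈ e, ∀ j ∈ e, g i = g j),
    filter_filter, filter_filter, add_comm]
  congr 2 <;> ext e <;> simp only [mem_filter, Prod.ext_iff, forall_and] <;> tauto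

end

namespace balanced

variable {n : ℕ} {x σ : Fin n → Bool}

theorem card_fiber (hx : balanced x) (a : Bool) : #{i | x i = a} = n / 2 := by
  have h := card_filter_eq_sum_card_fiber x (fun _ => True)
  simp only [filter_true, card_univ, Fintype.card_fin, Fintype.sum_bool] at h
  unfold balanced at hx
  cases a <;> omega

theorem card_pair_fiber (hx : balanced x) (hσ : balanced σ) (a b : Bool) :
    #{i | x i = a ∧ σ i = b} =
      if a = b then (n - #{i | x i ≠ σ i}) / 2 else #{i | x i ≠ σ i} / 2 := by
  obtain ⟨hxt, hσt, hne, hcard⟩ := card_bool_pair_fibers x σ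
  rw [Fintype.card_fin] at hcard
  unfold balanced at hx hσ
  cases a <;> cases b <;> simp only [if_true, if_false, Bool.false_eq_true, reduceCtorEq] <;> omega

theorem even_card_ne (hx : balanced x) (hσ : balanced σ) : Even #{i | x i ≠ σ i} := by
  obtain ⟨-, -, hne, -⟩ := card_bool_pair_fibers x σ
  rw [hne, hx.card_pair_fiber hσ, hx.card_pair_fiber hσ]
  exact ⟨_, rfl⟩

theorem card_crossing {k : ℕ} (hk : k ≠ 0) (hx : balanced x) (hσ : balanced σ) :
    (#{e : Finset (Fin n) | #e = k ∧ (∀ i ∈ e, ∀ j ∈ e, x i = x j) ∧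
        ¬∀ i ∈ e, ∀ j ∈ e, σ i = σ j} : ℤ) =
      2 * (((n / 2).choose k : ℤ) - ((#{i | x i ≠ σ i} / 2).choose k : ℤ)
        - (((n - #{i | x i ≠ σ i}) / 2).choose k : ℤ)) := by
  have hsplit := card_const_not_const_add_card_const_prod k x σ
  rw [card_finsets_const_eq_sum_choose hk, card_finsets_const_eq_sum_choose hk] at hsplit
  simp only [Fintype.sum_prod_type, Fintype.sum_bool, Prod.mk.injEq, hx.card_fiber,
    hx.card_pair_fiber hσ, Bool.true_eq_false, Bool.false_eq_true, if_true, if_false] at hsplit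
  -- Over `Fin n`, `∀ i ∈ e, _` is decided by another instance than over a general `α`.
  rw [filter_congr_decidable] at hsplit
  omega

end balanced

theorem count_crossing_edges_general (n k : ℕ) (hk : 2 ≤ k)
    (x σ : Fin n → Bool) (hx : balanced x) (hσ : balanced σ)
    (d : ℕ) (hd : d = (Finset.univ.filter (fun v => x v ≠ σ v)).card) :
    Even d ∧
    ((Finset.univ.filter (fun e : Finset (Fin n) =>
        e.card = k ∧ (∀ i ∈ e, ∀ j ∈ e, x i = x j) ∧
          ¬(∀ i ∈ e, ∀ j ∈ e, σ i = σ j))).card : ℤ)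
      = 2 * (((n / 2).choose k : ℤ) - ((d / 2).choose k : ℤ)
          - (((n - d) / 2).choose k : ℤ)) ∧
    ((Finset.univ.filter (fun e : Finset (Fin n) =>
        e.card = k ∧ (∀ i ∈ e, ∀ j ∈ e, σ i = σ j) ∧
          ¬(∀ i ∈ e, ∀ j ∈ e, x i = x j))).card : ℤ)
      = 2 * (((n / 2).choose k : ℤ) - ((d / 2).choose k : ℤ)
          - (((n - d) / 2).choose k : ℤ)) := by
  have hk0 : k ≠ 0 := by omega
  have hd_symm : d = #{v | σ v ≠ x v} := by simp_rw [hd, ne_comm]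
  subst hd
  exact ⟨hx.even_card_ne hσ, hx.card_crossing hk0 hσ, hd_symm ▸ hσ.card_crossing hk0 hx⟩

/-- For balanced `x, σ ∈ {±1}ⁿ` at Hamming distance `d` (necessarily even),
the number of `k`-subsets on which `x` is constant but `σ` is not equals
`2(C(n/2,k) - C(d/2,k) - C((n-d)/2,k))`, and likewise with the roles of `x` and `σ` swapped. -/
theorem count_crossing_edges (n k : ℕ) (hn : Even n) (hn0 : 0 < n) (hk : 2 ≤ k)
    (x σ : Fin n → Bool) (hx : balanced x) (hσ : balanced σ)
    (d : ℕ) (hd : d = (Finset.univ.filter (fun v => x v ≠ σ v)).card) :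
    Even d ∧
    ((Finset.univ.filter (fun e : Finset (Fin n) =>
        e.card = k ∧ (∀ i ∈ e, ∀ j ∈ e, x i = x j) ∧
          ¬(∀ i ∈ e, ∀ j ∈ e, σ i = σ j))).card : ℤ)
      = 2 * (((n / 2).choose k : ℤ) - ((d / 2).choose k : ℤ)
          - (((n - d) / 2).choose k : ℤ)) ∧
    ((Finset.univ.filter (fun e : Finset (Fin n) =>
        e.card = k ∧ (∀ i ∈ e, ∀ j ∈ e, σ i = σ j) ∧
          ¬(∀ i ∈ e, ∀ j ∈ e, x i = x j))).card : ℤ)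
      = 2 * (((n / 2).choose k : ℤ) - ((d / 2).choose k : ℤ)
          - (((n - d) / 2).choose k : ℤ)) :=
  count_crossing_edges_general n k hk x σ hx hσ d hd
end
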